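/- arXiv:2312.10891 — 6 statements merged into one kernel-verified Lean document; each statement's English description precedes it below -/
import Mathlib

section
/- Let a, c, d, α, β, θ be nonnegative reals with θ > 0, and let T be the 2×2 matrix [[a, c], [a(θα+β)+β, c(θα+β)+θd+|1-θ|]]. If |a|1-θ| + θad - cβ| < 1 and c(θα + 2β) < (1-a)(1 - |1-θ| - θd), then the spectral radius of T is less than 1. -/
/-! The characteristic polynomial of the real matrix `T` is `λ² - tr T · λ + det T`. A real root
`x` of `x² - t x + δ` with `|t| < 1 + δ < 2` lies in `(-1, 1)`, since the parabola is positive at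
`±1` and its vertex `t / 2` lies between them; a non-real root `z` has `|z|² = z z̄ = δ`. Hence both
eigenvalues lie in the open unit disc when `|det T| < 1` and `|tr T| < 1 + det T`. For the GRMS
matrix the trace is nonnegative, and `tr T < 1 + det T` rearranges to the second hypothesis. -/

theorem abs_lt_one_of_sq_sub_mul_add_eq_zero {t δ x : ℝ} (hδ : δ < 1) (ht : |t| < 1 + δ)
    (hx : x ^ 2 - t * x + δ = 0) : |x| < 1 := by
  rw [abs_lt] at ht ⊢
  constructor
  · by_contra! h
    nlinarith [mul_nonneg (by linarith : (0:ℝ) ≤ -1 - x) (by linarith : (0:ℝ) ≤ t + 1 - x)]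
  · by_contra! h
    nlinarith [mul_nonneg (by linarith : (0:ℝ) ≤ x - 1) (by linarith : (0:ℝ) ≤ x + 1 - t)]

theorem Complex.norm_lt_one_of_sq_sub_mul_add_eq_zero {t δ : ℝ} {z : ℂ} (hδ : |δ| < 1)
    (ht : |t| < 1 + δ) (hz : z ^ 2 - t * z + δ = 0) : ‖z‖ < 1 := by
  have hre := congrArg Complex.re hz
  have him := congrArg Complex.im hz
  simp only [pow_two, Complex.sub_re, Complex.add_re, Complex.mul_re, Complex.ofReal_re,
    Complex.ofReal_im, Complex.sub_im, Complex.add_im, Complex.mul_im, Complex.zero_re,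
    Complex.zero_im] at hre him
  rcases mul_eq_zero.mp (show z.im * (2 * z.re - t) = 0 by linarith) with hreal | hvertex
  · rw [← Complex.re_add_im z, hreal, Complex.ofReal_zero, zero_mul, add_zero,
      Complex.norm_real, Real.norm_eq_abs]
    exact abs_lt_one_of_sq_sub_mul_add_eq_zero (abs_lt.mp hδ).2 ht (by nlinarith)
  · have hsq : ‖z‖ ^ 2 = δ := by
      rw [Complex.sq_norm, Complex.normSq_apply]
      linear_combination -hre + z.re * hvertex
    nlinarith [norm_nonneg z, (abs_lt.mp hδ).2]

theorem Matrix.sq_sub_trace_mul_add_det_eq_zero_of_mem_spectrum_map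
    {M : Matrix (Fin 2) (Fin 2) ℝ} {z : ℂ} (hz : z ∈ spectrum ℂ (M.map (algebraMap ℝ ℂ))) :
    z ^ 2 - M.trace * z + M.det = 0 := by
  rw [Matrix.mem_spectrum_iff_isRoot_charpoly, Matrix.charpoly_fin_two] at hz
  simpa [Matrix.trace_fin_two, Matrix.det_fin_two] using hz

section

-- Any Banach algebra norm will do; `spectralRadius` does not depend on it.
attribute [local instance] Matrix.linftyOpNormedRing Matrix.linftyOpNormedAlgebra

theorem Matrix.spectralRadius_map_complex_lt_one_of_fin_two {M : Matrix (Fin 2) (Fin 2) ℝ}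
    (hdet : |M.det| < 1) (htr : |M.trace| < 1 + M.det) :
    spectralRadius ℂ (M.map (algebraMap ℝ ℂ)) < 1 := by
  refine spectrum.spectralRadius_lt_of_forall_lt _ fun z hz => ?_
  have hroot := Matrix.sq_sub_trace_mul_add_det_eq_zero_of_mem_spectrum_map hz
  exact_mod_cast Complex.norm_lt_one_of_sq_sub_mul_add_eq_zero hdet htr hroot

end

theorem stmt_2 (a c d α β θ : ℝ)
    (ha : 0 ≤ a) (hc : 0 ≤ c) (hd : 0 ≤ d) (hα : 0 ≤ α) (hβ : 0 ≤ β) (hθ : 0 < θ)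
    (h1 : |a * |1 - θ| + θ * a * d - c * β| < 1)
    (h2 : c * (θ * α + 2 * β) < (1 - a) * (1 - |1 - θ| - θ * d)) :
    spectralRadius ℂ
      ((!![a, c; a * (θ * α + β) + β, c * (θ * α + β) + θ * d + |1 - θ|] :
          Matrix (Fin 2) (Fin 2) ℝ).map (algebraMap ℝ ℂ)) < 1 := by
  apply Matrix.spectralRadius_map_complex_lt_one_of_fin_two
  · rw [Matrix.det_fin_two_of]
    convert h1 using 2
    ring
  · rw [Matrix.trace_fin_two_of, Matrix.det_fin_two_of, abs_of_nonneg (by positivity)]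
    linear_combination h2
end

section
/- Let a, c, d, α, β be nonnegative reals satisfying a < 1, cβ < ad + 1, c(2β + α) < (1-a)(1-d), and let θ satisfy 2cβ/((1-a)(1-d) - cα) < θ ≤ 1. Then |a(1-θ) + θad - cβ| < 1 and c(θα + 2β) < (1-a)(1 - |1-θ| - θd). -/
theorem stmt_3 (a c d α β θ : ℝ)
    (ha : 0 ≤ a) (hc : 0 ≤ c) (hd : 0 ≤ d) (hα : 0 ≤ α) (hβ : 0 ≤ β)
    (ha1 : a < 1) (hcb : c * β < a * d + 1)
    (h2 : c * (2 * β + α) < (1 - a) * (1 - d))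
    (hθ1 : 2 * c * β / ((1 - a) * (1 - d) - c * α) < θ) (hθ2 : θ ≤ 1) :
    |a * (1 - θ) + θ * a * d - c * β| < 1 ∧
      c * (θ * α + 2 * β) < (1 - a) * (1 - |1 - θ| - θ * d) := by
  have hD : 0 < (1 - a) * (1 - d) - c * α := by nlinarith [mul_nonneg hc hβ]
  have hkey : 2 * c * β < θ * ((1 - a) * (1 - d) - c * α) := by
    rw [div_lt_iff₀ hD] at hθ1; linarith
  have hθ0 : 0 < θ := by
    rcases lt_or_ge 0 θ with h | h
    · exact h
    · nlinarith [mul_nonneg hc hβ, mul_nonpos_of_nonpos_of_nonneg h hD.le]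
  have habs : |1 - θ| = 1 - θ := abs_of_nonneg (by linarith)
  constructor
  · rw [abs_lt]
    constructor
    · nlinarith [mul_nonneg (mul_nonneg ha (by linarith : (0:ℝ) ≤ 1 - θ)) (by nlinarith : (0:ℝ) ≤ 1 - d)]
    · nlinarith [mul_nonneg hc hβ, mul_nonneg (mul_nonneg hθ0.le ha) hd, mul_nonneg hθ0.le (mul_nonneg ha (by nlinarith : (0:ℝ) ≤ 1 - d))]
  · rw [habs]; nlinarith
end

section
/- Let a, c, d, α, β be nonnegative reals satisfying a < 1, cβ < ad + 1, c(2β + α) < (1-a)(1-d), and let θ satisfy 1 < θ < (2(1-a) - 2cβ)/((1-a)(1+d) + cα). Then |a(θ-1) + θad - cβ| < 1 and c(θα + 2β) < (1-a)(1 - (θ-1) - θd). -/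
theorem stmt_4 (a c d α β θ : ℝ)
    (ha : 0 ≤ a) (hc : 0 ≤ c) (hd : 0 ≤ d) (hα : 0 ≤ α) (hβ : 0 ≤ β)
    (ha1 : a < 1) (hcb : c * β < a * d + 1)
    (h2 : c * (2 * β + α) < (1 - a) * (1 - d))
    (hθ1 : 1 < θ)
    (hθ2 : θ < (2 * (1 - a) - 2 * c * β) / ((1 - a) * (1 + d) + c * α)) :
    |a * (θ - 1) + θ * a * d - c * β| < 1 ∧
      c * (θ * α + 2 * β) < (1 - a) * (1 - (θ - 1) - θ * d) := by
  have hD : 0 < (1 - a) * (1 + d) + c * α := by nlinarith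
  have hmul : θ * ((1 - a) * (1 + d) + c * α) < 2 * (1 - a) - 2 * c * β :=
    (lt_div_iff₀ hD).mp hθ2
  have hsecond : c * (θ * α + 2 * β) < (1 - a) * (1 - (θ - 1) - θ * d) := by nlinarith
  refine ⟨abs_lt.mpr ⟨?_, ?_⟩, hsecond⟩
  · nlinarith [mul_nonneg ha hd, mul_nonneg (mul_nonneg ha hd) (sub_pos.mpr hθ1).le, mul_nonneg ha (sub_pos.mpr hθ1).le]
  · have hcs : 0 ≤ c * (θ * α + 2 * β) := by positivity
    have hθd : θ * (1 + d) < 2 := by nlinarith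
    nlinarith
end

section
/- Let A, B ∈ ℝⁿˣⁿ with A invertible and ‖A⁻¹B‖ < 1 (operator 2-norm). Then for every b ∈ ℝⁿ, the equation Ax - B|x| = b has a unique solution, where |x| denotes the componentwise absolute value. -/
/-- The operator 2-norm of a real square matrix, i.e. its norm as a linear
operator on Euclidean space. -/
noncomputable def l2OpNorm {n : ℕ} (A : Matrix (Fin n) (Fin n) ℝ) : ℝ :=
  ‖(Matrix.toEuclideanCLM (𝕜 := ℝ) A :
      EuclideanSpace ℝ (Fin n) →L[ℝ] EuclideanSpace ℝ (Fin n))‖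

lemma abs_lip {n : ℕ} (x y : EuclideanSpace ℝ (Fin n)) :
    ‖((WithLp.equiv 2 (Fin n → ℝ)).symm fun i => |x i|) -
      ((WithLp.equiv 2 (Fin n → ℝ)).symm fun i => |y i|)‖ ≤ ‖x - y‖ := by
  rw [EuclideanSpace.norm_eq, EuclideanSpace.norm_eq]
  apply Real.sqrt_le_sqrt
  apply Finset.sum_le_sum
  intro i _
  have h1 : |(|x i| - |y i|)| ≤ |x i - y i| := abs_abs_sub_abs_le_abs_sub _ _
  simp only [Real.norm_eq_abs]
  calc |((WithLp.equiv 2 (Fin n → ℝ)).symm fun i => |x i|) i -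
        ((WithLp.equiv 2 (Fin n → ℝ)).symm fun i => |y i|) i| ^ 2
      = |(|x i| - |y i|)| ^ 2 := rfl
    _ ≤ |x i - y i| ^ 2 := by
        apply pow_le_pow_left₀ (abs_nonneg _) h1
    _ = |(x - y) i| ^ 2 := rfl

theorem stmt_6 (n : ℕ) (A B : Matrix (Fin n) (Fin n) ℝ)
    (hA : IsUnit A) (h : l2OpNorm (A⁻¹ * B) < 1) (b : Fin n → ℝ) :
    ∃! x : Fin n → ℝ, A.mulVec x - B.mulVec (fun i => |x i|) = b := by
  have hdet : IsUnit A.det := (Matrix.isUnit_iff_isUnit_det A).mp hA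
  have hinv : A⁻¹ * A = 1 := Matrix.nonsing_inv_mul A hdet
  have hinv' : A * A⁻¹ = 1 := Matrix.mul_nonsing_inv A hdet
  set M := A⁻¹ * B with hM
  set T : EuclideanSpace ℝ (Fin n) →L[ℝ] EuclideanSpace ℝ (Fin n) :=
    Matrix.toEuclideanCLM (𝕜 := ℝ) M with hT
  set f : EuclideanSpace ℝ (Fin n) → EuclideanSpace ℝ (Fin n) :=
    fun x => T ((WithLp.equiv 2 (Fin n → ℝ)).symm fun i => |x i|) +
      (WithLp.equiv 2 (Fin n → ℝ)).symm (A⁻¹.mulVec b) with hf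
  -- f is Lipschitz with constant ‖T‖₊
  have hlip : LipschitzWith ‖T‖₊ f := by
    apply LipschitzWith.of_dist_le_mul
    intro x y
    rw [dist_eq_norm, dist_eq_norm, coe_nnnorm, hf]
    simp only [add_sub_add_right_eq_sub]
    calc ‖T ((WithLp.equiv 2 (Fin n → ℝ)).symm fun i => |x i|) -
          T ((WithLp.equiv 2 (Fin n → ℝ)).symm fun i => |y i|)‖
        = ‖T (((WithLp.equiv 2 (Fin n → ℝ)).symm fun i => |x i|) -
            ((WithLp.equiv 2 (Fin n → ℝ)).symm fun i => |y i|))‖ := by rw [map_sub]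
      _ ≤ ‖T‖ * ‖((WithLp.equiv 2 (Fin n → ℝ)).symm fun i => |x i|) -
            ((WithLp.equiv 2 (Fin n → ℝ)).symm fun i => |y i|)‖ := T.le_opNorm _
      _ ≤ ‖T‖ * ‖x - y‖ :=
          mul_le_mul_of_nonneg_left (abs_lip x y) (norm_nonneg T)
  have hK : ‖T‖₊ < 1 := by
    rw [← NNReal.coe_lt_coe]
    exact h
  have hcontr : ContractingWith ‖T‖₊ f := ⟨hK, hlip⟩
  -- f applied to the image of a plain vector, computed definitionally
  have hfx : ∀ x : Fin n → ℝ,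
      f ((WithLp.equiv 2 (Fin n → ℝ)).symm x) =
        (WithLp.equiv 2 (Fin n → ℝ)).symm
          ((M.mulVec fun i => |x i|) + A⁻¹.mulVec b) := fun x => rfl
  -- key equivalence
  have key : ∀ x : Fin n → ℝ,
      (A.mulVec x - B.mulVec (fun i => |x i|) = b) ↔
        f ((WithLp.equiv 2 (Fin n → ℝ)).symm x) = (WithLp.equiv 2 (Fin n → ℝ)).symm x := by
    intro x
    rw [hfx x, Equiv.apply_eq_iff_eq]
    constructor
    · intro hx
      have : A⁻¹.mulVec (A.mulVec x - B.mulVec (fun i => |x i|)) = A⁻¹.mulVec b := by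
        rw [hx]
      rw [Matrix.mulVec_sub, Matrix.mulVec_mulVec, hinv, Matrix.one_mulVec,
        Matrix.mulVec_mulVec] at this
      rw [hM, ← this]
      abel
    · intro hx2
      have := congrArg (A.mulVec) hx2
      rw [Matrix.mulVec_add, Matrix.mulVec_mulVec, Matrix.mulVec_mulVec, hM,
        ← Matrix.mul_assoc, hinv', Matrix.one_mul, Matrix.one_mulVec] at this
      rw [← this]
      abel
  set x₀ : EuclideanSpace ℝ (Fin n) := hcontr.fixedPoint f
  refine ⟨WithLp.equiv 2 (Fin n → ℝ) x₀, ?_, ?_⟩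
  · show A.mulVec _ - B.mulVec _ = b
    rw [key]
    simp only [Equiv.symm_apply_apply]
    exact hcontr.fixedPoint_isFixedPt
  · intro y hy
    rw [key] at hy
    have : (WithLp.equiv 2 (Fin n → ℝ)).symm y = x₀ :=
      hcontr.fixedPoint_unique hy
    rw [← this]
    simp
end

section
/- Let A, B ∈ ℝⁿˣⁿ with A invertible and let τ > 0 satisfy τ‖A⁻¹B‖ < 1 - |1 - τ|. Then 0 < τ < 2 and ‖A⁻¹B‖ < (1 - |1-τ|)/τ ≤ 1; moreover for every b ∈ ℝⁿ the GAVE Ax - B|x| = b has a unique solution. -/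
/-! Since `| |a| - |b| | ≤ |a - b|`, the componentwise absolute value is 1-Lipschitz for the
Euclidean norm. Writing the GAVE as the fixed point equation `x = A⁻¹B|x| + A⁻¹b`, the right-hand
side is therefore a contraction with constant `‖A⁻¹B‖ < 1`, and Banach's fixed point theorem gives
existence and uniqueness of the solution. -/

open Matrix

theorem lt_two_of_mul_lt_one_sub_abs_one_sub {τ k : ℝ} (hk : 0 ≤ k)
    (h : τ * k < 1 - |1 - τ|) : τ < 2 := by
  have := neg_abs_le (1 - τ)
  nlinarith

theorem one_sub_abs_one_sub_div_le_one {τ : ℝ} (hτ : 0 < τ) : (1 - |1 - τ|) / τ ≤ 1 := by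
  rw [div_le_one hτ]
  linarith [le_abs_self (1 - τ)]

theorem EuclideanSpace.lipschitzWith_one_abs {ι : Type*} [Fintype ι] :
    LipschitzWith 1 fun x : EuclideanSpace ℝ ι => WithLp.toLp 2 fun i => |x i| := by
  refine LipschitzWith.of_dist_le_mul fun x y => ?_
  simp only [NNReal.coe_one, one_mul, EuclideanSpace.dist_eq, Real.dist_eq]
  refine Real.sqrt_le_sqrt (Finset.sum_le_sum fun i _ => ?_)
  exact pow_le_pow_left₀ (abs_nonneg _) (abs_abs_sub_abs_le_abs_sub _ _) 2

theorem ContinuousLinearMap.existsUnique_isFixedPt_comp_add {E : Type*} [NormedAddCommGroup E]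
    [NormedSpace ℝ E] [CompleteSpace E] (T : E →L[ℝ] E) (hT : ‖T‖ < 1) {g : E → E}
    (hg : LipschitzWith 1 g) (c : E) : ∃! x, Function.IsFixedPt (fun x => T (g x) + c) x := by
  have hcontr : ContractingWith ‖T‖₊ fun x => T (g x) + c := by
    refine ⟨by exact_mod_cast hT, LipschitzWith.of_dist_le_mul fun x y => ?_⟩
    rw [dist_add_right]
    simpa using (T.lipschitz.comp hg).dist_le_mul x y
  exact ⟨_, hcontr.fixedPoint_isFixedPt, fun _ hx => hcontr.fixedPoint_unique hx⟩

theorem Matrix.existsUnique_eq_mulVec_abs_add {n : ℕ} (M : Matrix (Fin n) (Fin n) ℝ)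
    (hM : l2OpNorm M < 1) (c : Fin n → ℝ) :
    ∃! x : Fin n → ℝ, x = M *ᵥ (fun i => |x i|) + c := by
  rw [← (WithLp.equiv 2 (Fin n → ℝ)).existsUnique_congr_right]
  convert (toEuclideanCLM (𝕜 := ℝ) M).existsUnique_isFixedPt_comp_add hM
    EuclideanSpace.lipschitzWith_one_abs (WithLp.toLp 2 c) using 2 with x
  simp only [Function.IsFixedPt, toEuclideanCLM_toLp, WithLp.equiv_apply]
  rw [← WithLp.toLp_add, eq_comm, ← (WithLp.ofLp_injective 2).eq_iff, WithLp.ofLp_toLp]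

theorem Matrix.sub_mulVec_eq_iff_eq_inv_mul_mulVec_add {ι K : Type*} [Fintype ι]
    [DecidableEq ι] [Field K] {A : Matrix ι ι K} (hA : IsUnit A) (B : Matrix ι ι K)
    (x y b : ι → K) : A *ᵥ x - B *ᵥ y = b ↔ x = (A⁻¹ * B) *ᵥ y + A⁻¹ *ᵥ b := by
  have := hA.invertible
  rw [sub_eq_iff_eq_add', ← mulVec_mulVec, ← mulVec_add]
  constructor
  · intro h
    rw [← h]
    exact (inv_mulVec_eq_vec rfl).symm
  · rintro rfl
    rw [mulVec_mulVec, mul_inv_of_invertible, one_mulVec]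

theorem stmt_18 (n : ℕ) (A B : Matrix (Fin n) (Fin n) ℝ) (hA : IsUnit A)
    (τ : ℝ) (hτ : 0 < τ)
    (h : τ * l2OpNorm (A⁻¹ * B) < 1 - |1 - τ|) :
    (0 < τ ∧ τ < 2) ∧
      l2OpNorm (A⁻¹ * B) < (1 - |1 - τ|) / τ ∧ (1 - |1 - τ|) / τ ≤ 1 ∧
      ∀ b : Fin n → ℝ,
        ∃! x : Fin n → ℝ, A.mulVec x - B.mulVec (fun i => |x i|) = b := by
  have hnorm : 0 ≤ l2OpNorm (A⁻¹ * B) := norm_nonneg _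
  have hlt : l2OpNorm (A⁻¹ * B) < (1 - |1 - τ|) / τ := by
    rw [lt_div_iff₀ hτ]
    linarith
  have hle := one_sub_abs_one_sub_div_le_one hτ
  refine ⟨⟨hτ, lt_two_of_mul_lt_one_sub_abs_one_sub hnorm h⟩, hlt, hle, fun b => ?_⟩
  simpa only [sub_mulVec_eq_iff_eq_inv_mul_mulVec_add hA] using
    existsUnique_eq_mulVec_abs_add _ (hlt.trans_le hle) (A⁻¹ *ᵥ b)
end

section
/- Let ω be a real number with 0 < ω < 2 and let A, B ∈ ℝⁿˣⁿ with A invertible. If ‖A⁻¹B‖ < ((1 - |1-ω|)/ω)², then ω·√(‖A⁻¹B‖) < 1 - |1-ω|, and the GAVE Ax - B|x| = b has a unique solution for every b ∈ ℝⁿ to which the SOR-like iteration converges. -/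
/-!
Write `a = |1 - ω|` and measure the errors `p k = ‖x k - x*‖`, `q k = ‖y k - |x*|‖` in the
Euclidean norm, for which `|·|` is 1-Lipschitz. The iteration gives
`p (k+1) ≤ a p k + ω ‖A⁻¹B‖ q k` and `q (k+1) ≤ a q k + ω p (k+1)`, so the weighted maximum
`max (ω p k) ((1 - a) q k)` shrinks by a fixed factor below one exactly when
`ω² ‖A⁻¹B‖ < (1 - a)²`. Since `1 - a ≤ ω`, the same condition gives `‖A⁻¹B‖ < 1`, so
`x ↦ A⁻¹ (B |x| + b)` is a contraction whose unique fixed point is the unique solution.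
-/

open Filter Topology WithLp Matrix
open scoped NNReal

theorem tendsto_zero_of_coupled_le {a ω K : ℝ} {p q : ℕ → ℝ}
    (ha₀ : 0 ≤ a) (ha₁ : a < 1) (hω : 0 < ω) (hK : 0 ≤ K) (hωK : ω ^ 2 * K < (1 - a) ^ 2)
    (hp : ∀ k, 0 ≤ p k)
    (hp_succ : ∀ k, p (k + 1) ≤ a * p k + ω * K * q k)
    (hq_succ : ∀ k, q (k + 1) ≤ a * q k + ω * p (k + 1)) :
    Tendsto p atTop (𝓝 0) := by
  set s := 1 - a
  set m := ω ^ 2 * K / s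
  set d : ℕ → ℝ := fun k => max (ω * p k) (s * q k)
  set r := a + s * (a + m)
  have hs : 0 < s := by linarith
  have hm₀ : 0 ≤ m := by positivity
  have hms : m * s = ω ^ 2 * K := div_mul_cancel₀ _ hs.ne'
  have hm : m < s := (div_lt_iff₀ hs).2 (by nlinarith)
  have hr₀ : 0 ≤ r := by positivity
  have hr₁ : r < 1 := by nlinarith
  have hd : ∀ k, 0 ≤ d k := fun k => (mul_nonneg hω.le (hp k)).trans (le_max_left _ _)
  have hstep : ∀ k, d (k + 1) ≤ r * d k := by
    intro k
    have hp_step : ω * p (k + 1) ≤ (a + m) * d k :=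
      calc ω * p (k + 1) ≤ ω * (a * p k + ω * K * q k) :=
            mul_le_mul_of_nonneg_left (hp_succ k) hω.le
        _ = a * (ω * p k) + m * (s * q k) := by linear_combination -(q k) * hms
        _ ≤ a * d k + m * d k := by gcongr <;> simp [d]
        _ = (a + m) * d k := by ring
    refine max_le ?_ ?_
    · refine hp_step.trans (mul_le_mul_of_nonneg_right ?_ (hd k))
      show a + m ≤ a + s * (a + m)
      nlinarith [mul_nonneg ha₀ (sub_nonneg.2 hm.le)]
    · calc s * q (k + 1) ≤ a * (s * q k) + s * (ω * p (k + 1)) := by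
            nlinarith [hq_succ k]
        _ ≤ a * d k + s * ((a + m) * d k) := by gcongr; simp [d]
        _ = r * d k := by ring
  have hd_lim : Tendsto d atTop (𝓝 0) := by
    refine squeeze_zero hd (fun k => le_geom hr₀ k fun j _ => hstep j) ?_
    simpa using (tendsto_pow_atTop_nhds_zero_of_lt_one hr₀ hr₁).mul_const (d 0)
  refine squeeze_zero hp (fun k => (le_div_iff₀' hω).2 (le_max_left _ (s * q k))) ?_
  simpa using hd_lim.div_const ω

theorem norm_relax_sub_le {E : Type*} [SeminormedAddCommGroup E] [NormedSpace ℝ E]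
    (ω : ℝ) (u v w : E) :
    ‖(1 - ω) • u + ω • v - w‖ ≤ |1 - ω| * ‖u - w‖ + |ω| * ‖v - w‖ :=
  calc ‖(1 - ω) • u + ω • v - w‖ = ‖(1 - ω) • (u - w) + ω • (v - w)‖ := by congr 1; module
    _ ≤ ‖(1 - ω) • (u - w)‖ + ‖ω • (v - w)‖ := norm_add_le _ _
    _ = |1 - ω| * ‖u - w‖ + |ω| * ‖v - w‖ := by rw [norm_smul, norm_smul, Real.norm_eq_abs,
          Real.norm_eq_abs]

theorem lt_one_of_sq_mul_lt_sq_one_sub_abs {ω K : ℝ} (hω : 0 < ω)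
    (h : ω ^ 2 * K < (1 - |1 - ω|) ^ 2) : K < 1 := by
  have habs : |1 - ω| ≤ 1 + ω := abs_le.2 ⟨by linarith, by linarith⟩
  have : (1 - |1 - ω|) ^ 2 ≤ ω ^ 2 :=
    sq_le_sq' (by linarith) (by linarith [le_abs_self (1 - ω)])
  nlinarith

theorem tendsto_sorLike {E : Type*} [NormedAddCommGroup E] [NormedSpace ℝ E]
    {G φ : E → E} {K : ℝ≥0} {ω : ℝ} (hG : LipschitzWith K G) (hφ : LipschitzWith 1 φ)
    (hω₀ : 0 < ω) (hω₂ : ω < 2) (hωK : ω ^ 2 * K < (1 - |1 - ω|) ^ 2)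
    {xs : E} (hxs : G (φ xs) = xs) {x y : ℕ → E}
    (hx : ∀ k, x (k + 1) = (1 - ω) • x k + ω • G (y k))
    (hy : ∀ k, y (k + 1) = (1 - ω) • y k + ω • φ (x (k + 1))) :
    Tendsto x atTop (𝓝 xs) := by
  rw [tendsto_iff_norm_sub_tendsto_zero]
  refine tendsto_zero_of_coupled_le (q := fun k => ‖y k - φ xs‖) (abs_nonneg _)
    (abs_sub_lt_iff.2 ⟨by linarith, by linarith⟩) hω₀ K.2 hωK (fun _ => norm_nonneg _)
    (fun k => ?_) (fun k => ?_)
  · calc ‖x (k + 1) - xs‖ ≤ |1 - ω| * ‖x k - xs‖ + |ω| * ‖G (y k) - G (φ xs)‖ := by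
          rw [hx k, hxs]; exact norm_relax_sub_le ω _ _ _
      _ ≤ |1 - ω| * ‖x k - xs‖ + ω * (K * ‖y k - φ xs‖) := by
          rw [abs_of_pos hω₀]; gcongr; exact hG.norm_sub_le _ _
      _ = |1 - ω| * ‖x k - xs‖ + ω * K * ‖y k - φ xs‖ := by ring
  · calc ‖y (k + 1) - φ xs‖ ≤ |1 - ω| * ‖y k - φ xs‖ + |ω| * ‖φ (x (k + 1)) - φ xs‖ := by
          rw [hy k]; exact norm_relax_sub_le ω _ _ _
      _ ≤ |1 - ω| * ‖y k - φ xs‖ + ω * ‖x (k + 1) - xs‖ := by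
          rw [abs_of_pos hω₀]; gcongr; simpa using hφ.norm_sub_le (x (k + 1)) xs

theorem existsUnique_fixedPoint_sorLike {α : Type*} [MetricSpace α] [CompleteSpace α]
    [Nonempty α] {G φ : α → α} {K : ℝ≥0} {ω : ℝ} (hG : LipschitzWith K G)
    (hφ : LipschitzWith 1 φ) (hω₀ : 0 < ω) (hωK : ω ^ 2 * K < (1 - |1 - ω|) ^ 2) :
    ∃! x, G (φ x) = x := by
  have hf : ContractingWith K (G ∘ φ) :=
    ⟨lt_one_of_sq_mul_lt_sq_one_sub_abs hω₀ hωK, by simpa using hG.comp hφ⟩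
  exact ⟨_, hf.fixedPoint_isFixedPt, fun _ hx => hf.fixedPoint_unique hx⟩

theorem lipschitzWith_one_toLp_abs {ι : Type*} [Fintype ι] :
    LipschitzWith 1 (fun v : EuclideanSpace ℝ ι => toLp 2 (fun i => |v i|)) := by
  refine lipschitzWith_iff_norm_sub_le.2 fun u v => ?_
  rw [NNReal.coe_one, one_mul, EuclideanSpace.norm_eq, EuclideanSpace.norm_eq]
  gcongr with i
  simpa using abs_abs_sub_abs_le_abs_sub (u i) (v i)

namespace Matrix

variable {ι : Type*} [Fintype ι] [DecidableEq ι]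

theorem mulVec_sub_eq_iff_inv_mulVec_add_eq {α : Type*} [CommRing α] {A : Matrix ι ι α}
    (hA : IsUnit A) {x w b : ι → α} : A *ᵥ x - w = b ↔ A⁻¹ *ᵥ (w + b) = x := by
  have hdet := (isUnit_iff_isUnit_det A).1 hA
  rw [sub_eq_iff_eq_add']
  constructor
  · rintro h; rw [← h, mulVec_mulVec, nonsing_inv_mul _ hdet, one_mulVec]
  · rintro rfl; rw [mulVec_mulVec, mul_nonsing_inv _ hdet, one_mulVec]

theorem toLp_mulVec_mulVec_add {𝕜 : Type*} [RCLike 𝕜] (C B : Matrix ι ι 𝕜) (u b : ι → 𝕜) :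
    toLp 2 (C *ᵥ (B *ᵥ u + b)) =
      toEuclideanCLM (𝕜 := 𝕜) (C * B) (toLp 2 u) + toLp 2 (C *ᵥ b) := by
  rw [toEuclideanCLM_toLp, mulVec_add, mulVec_mulVec, toLp_add]

end Matrix

theorem stmt_19 (n : ℕ) (A B : Matrix (Fin n) (Fin n) ℝ) (hA : IsUnit A)
    (ω : ℝ) (hω0 : 0 < ω) (hω2 : ω < 2)
    (h : l2OpNorm (A⁻¹ * B) < ((1 - |1 - ω|) / ω) ^ 2) :
    ω * Real.sqrt (l2OpNorm (A⁻¹ * B)) < 1 - |1 - ω| ∧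
      ∀ b : Fin n → ℝ,
        (∃! x : Fin n → ℝ, A.mulVec x - B.mulVec (fun i => |x i|) = b) ∧
        ∀ xs : Fin n → ℝ, A.mulVec xs - B.mulVec (fun i => |xs i|) = b →
          ∀ x y : ℕ → Fin n → ℝ,
            (∀ k, x (k + 1) =
              (1 - ω) • x k + ω • A⁻¹.mulVec (B.mulVec (y k) + b)) →
            (∀ k, y (k + 1) =
              (1 - ω) • y k + ω • fun i => |x (k + 1) i|) →
            Filter.Tendsto x Filter.atTop (nhds xs) := by
  have ha : |1 - ω| < 1 := abs_sub_lt_iff.2 ⟨by linarith, by linarith⟩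
  have hbound : 0 < (1 - |1 - ω|) / ω := div_pos (by linarith) hω0
  set M := toEuclideanCLM (𝕜 := ℝ) (A⁻¹ * B)
  have hM : ω ^ 2 * ‖M‖₊ < (1 - |1 - ω|) ^ 2 := by
    rw [coe_nnnorm, ← lt_div_iff₀' (by positivity), ← div_pow]; exact h
  refine ⟨(lt_div_iff₀' hω0).1 ((Real.sqrt_lt' hbound).2 h), fun b => ?_⟩
  set G : EuclideanSpace ℝ (Fin n) → EuclideanSpace ℝ (Fin n) :=
    fun v => toLp 2 (A⁻¹ *ᵥ (B *ᵥ ofLp v + b))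
  set φ := fun v : EuclideanSpace ℝ (Fin n) => toLp 2 (fun i => |v i|)
  have hG : LipschitzWith ‖M‖₊ G := lipschitzWith_iff_norm_sub_le.2 fun u v => by
    simp only [G, toLp_mulVec_mulVec_add, toLp_ofLp, add_sub_add_right_eq_sub, ← map_sub]
    exact M.le_opNorm (u - v)
  have hsol (x : Fin n → ℝ) :
      A *ᵥ x - B *ᵥ (fun i => |x i|) = b ↔ G (φ (toLp 2 x)) = toLp 2 x := by
    rw [mulVec_sub_eq_iff_inv_mulVec_add_eq hA, (WithLp.toLp_injective 2).eq_iff]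
  refine ⟨(WithLp.equiv 2 _).symm.existsUnique_congr hsol |>.2
    (existsUnique_fixedPoint_sorLike hG lipschitzWith_one_toLp_abs hω0 hM), ?_⟩
  intro xs hxs x y hx hy
  have hconv := tendsto_sorLike hG lipschitzWith_one_toLp_abs hω0 hω2 hM ((hsol xs).1 hxs)
    (x := fun k => toLp 2 (x k)) (y := fun k => toLp 2 (y k))
    (fun k => by simp [G, hx k]) (fun k => by simp [hy k])
  exact ((PiLp.continuous_ofLp 2 _).tendsto _).comp hconv
end
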